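/- arXiv:0711.0094 — 3 statements merged into one kernel-verified Lean document; each statement's English description precedes it below -/
import Mathlib

section
/- For every g ≥ 1, every τ in the Siegel upper half-space H_g, and every z ∈ ℂ^g, the family (exp(πi(nᵀτn + 2nᵀz)))_{n ∈ ℤ^g} is absolutely summable; in particular the Riemann theta function θ(τ,z) := ∑_{n∈ℤ^g} exp(πi(nᵀτn + 2nᵀz)) is a well-defined complex number. -/
/-!
Since `Im τ` is positive definite, `nᵀ (Im τ) n ≥ c ∑ nᵢ²` for some `c > 0` (the minimum of the
quadratic form on the unit sphere). As `|exp(πi(nᵀτn + 2nᵀz))| = exp(-π(nᵀ (Im τ) n + 2nᵀ Im z))`,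
the terms are dominated by the products `∏ᵢ exp(-π(c nᵢ² - 2|Im zᵢ| |nᵢ|))` of one-variable
Jacobi theta bounds, and a product of nonnegative summable families is summable over `ℤ^g`.
-/

open scoped Matrix
open Matrix

/-- The general term of the Riemann theta series:
`exp(πi(nᵀτn + 2nᵀz))` for an integer vector `n`. -/
noncomputable def thetaTerm (g : ℕ) (τ : Matrix (Fin g) (Fin g) ℂ) (z : Fin g → ℂ)
    (n : Fin g → ℤ) : ℂ :=
  Complex.exp ((Real.pi : ℂ) * Complex.I *
    ((fun i => (n i : ℂ)) ⬝ᵥ τ.mulVec (fun i => (n i : ℂ)) +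
      2 * ((fun i => (n i : ℂ)) ⬝ᵥ z)))

open Finset Real

theorem summable_pi_prod_of_nonneg {ι β : Type*} [Fintype ι] {f : ι → β → ℝ}
    (hf : ∀ i b, 0 ≤ f i b) (hs : ∀ i, Summable (f i)) :
    Summable fun x : ι → β => ∏ i, f i (x i) := by
  classical
  refine summable_of_sum_le (c := ∏ i, ∑' b, f i b)
    (fun x => prod_nonneg fun i _ => hf i (x i)) fun s => ?_
  calc ∑ x ∈ s, ∏ i, f i (x i)
      ≤ ∑ x ∈ Fintype.piFinset fun i => s.image (· i), ∏ i, f i (x i) :=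
        sum_le_sum_of_subset_of_nonneg
          (fun x hx => Fintype.mem_piFinset.2 fun i => mem_image_of_mem _ hx)
          fun x _ _ => prod_nonneg fun i _ => hf i (x i)
    _ = ∏ i, ∑ b ∈ s.image (· i), f i b := (prod_univ_sum _ _).symm
    _ ≤ ∏ i, ∑' b, f i b :=
        prod_le_prod (fun i _ => sum_nonneg fun b _ => hf i b)
          fun i _ => (hs i).sum_le_tsum _ fun b _ => hf i b

theorem exists_pos_mul_norm_sq_le {E : Type*} [NormedAddCommGroup E] [NormedSpace ℝ E]
    [FiniteDimensional ℝ E] {q : E → ℝ} (hq : Continuous q)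
    (hsmul : ∀ (t : ℝ) x, q (t • x) = t ^ 2 * q x) (hpos : ∀ x ≠ 0, 0 < q x) :
    ∃ c > 0, ∀ x, c * ‖x‖ ^ 2 ≤ q x := by
  rcases subsingleton_or_nontrivial E with hE | hE
  · exact ⟨1, one_pos, fun x => by simpa [Subsingleton.elim x 0] using (hsmul 0 0).ge⟩
  obtain ⟨x₀, hx₀, hmin⟩ := (isCompact_sphere (0 : E) 1).exists_isMinOn
    (NormedSpace.sphere_nonempty.2 zero_le_one) hq.continuousOn
  have hx₀_ne : x₀ ≠ 0 := ne_zero_of_mem_unit_sphere ⟨x₀, hx₀⟩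
  refine ⟨q x₀, hpos x₀ hx₀_ne, fun x => ?_⟩
  rcases eq_or_ne x 0 with rfl | hx
  · simpa using (hsmul 0 0).ge
  have hx' : ‖x‖ ≠ 0 := norm_ne_zero_iff.2 hx
  calc q x₀ * ‖x‖ ^ 2 ≤ q (‖x‖⁻¹ • x) * ‖x‖ ^ 2 := by
        gcongr
        exact hmin (by simp [norm_smul, hx'])
    _ = q x := by rw [hsmul]; field_simp

theorem Matrix.PosDef.exists_pos_mul_sum_sq_le {ι : Type*} [Fintype ι] {Y : Matrix ι ι ℝ}
    (hY : Y.PosDef) : ∃ c > 0, ∀ x : ι → ℝ, c * ∑ i, x i ^ 2 ≤ x ⬝ᵥ Y *ᵥ x := by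
  obtain ⟨c, hc, hq⟩ := exists_pos_mul_norm_sq_le (E := EuclideanSpace ℝ ι)
    (q := fun x => x.ofLp ⬝ᵥ Y *ᵥ x.ofLp) (by fun_prop)
    (fun t x => by simp [smul_dotProduct, mulVec_smul]; ring)
    (fun x hx => by simpa using hY.dotProduct_mulVec_pos (x := x.ofLp) (by simpa using hx))
  refine ⟨c, hc, fun x => ?_⟩
  simpa [EuclideanSpace.norm_sq_eq] using hq (WithLp.toLp 2 x)

theorem norm_thetaTerm (g : ℕ) (τ : Matrix (Fin g) (Fin g) ℂ) (z : Fin g → ℂ)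
    (n : Fin g → ℤ) :
    ‖thetaTerm g τ z n‖ = rexp (-π * ((fun i => (n i : ℝ)) ⬝ᵥ
      (of fun i j => (τ i j).im) *ᵥ (fun i => (n i : ℝ)) + 2 * ∑ i, n i * (z i).im)) := by
  rw [thetaTerm, Complex.norm_exp]
  simp [dotProduct, mulVec, Complex.im_sum, mul_sum]

theorem norm_thetaTerm_le_prod {g : ℕ} {τ : Matrix (Fin g) (Fin g) ℂ} {c : ℝ}
    (hc : ∀ x : Fin g → ℝ, c * ∑ i, x i ^ 2 ≤ x ⬝ᵥ (of fun i j => (τ i j).im) *ᵥ x)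
    (z : Fin g → ℂ) (n : Fin g → ℤ) :
    ‖thetaTerm g τ z n‖ ≤ ∏ i, rexp (-π * (c * n i ^ 2 - 2 * |(z i).im| * |(n i : ℝ)|)) := by
  have hlin : -∑ i, |(z i).im| * |(n i : ℝ)| ≤ ∑ i, n i * (z i).im := by
    rw [← sum_neg_distrib]
    refine sum_le_sum fun i _ => ?_
    rw [← abs_mul, mul_comm]
    exact neg_abs_le _
  rw [norm_thetaTerm, ← exp_sum, exp_le_exp, ← mul_sum,
    mul_le_mul_left_of_neg (neg_neg_of_pos pi_pos)]
  simp only [sum_sub_distrib, ← mul_sum, mul_assoc]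
  linarith [hc fun i => (n i : ℝ)]

theorem theta_series_abs_summable_general (g : ℕ)
    (τ : Matrix (Fin g) (Fin g) ℂ)
    (hpos : (Matrix.of fun i j => (τ i j).im).PosDef)
    (z : Fin g → ℂ) :
    Summable (fun n : Fin g → ℤ => ‖thetaTerm g τ z n‖) ∧
      Summable (fun n : Fin g → ℤ => thetaTerm g τ z n) := by
  obtain ⟨c, hc, hquad⟩ := hpos.exists_pos_mul_sum_sq_le
  let b (i : Fin g) (m : ℤ) : ℝ := rexp (-π * (c * m ^ 2 - 2 * |(z i).im| * |(m : ℝ)|))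
  have hb : ∀ i, Summable (b i) := fun i => by
    simpa [b] using summable_pow_mul_jacobiTheta₂_term_bound |(z i).im| hc 0
  have hnorm : Summable fun n => ‖thetaTerm g τ z n‖ :=
    (summable_pi_prod_of_nonneg (fun _ _ => (exp_pos _).le) hb).of_nonneg_of_le
      (fun _ => norm_nonneg _) (norm_thetaTerm_le_prod hquad z)
  exact ⟨hnorm, hnorm.of_norm⟩

/-- For `τ` in the Siegel upper half-space (symmetric with positive definite imaginary
part) and any `z ∈ ℂ^g`, the theta series is absolutely summable; in particular the
Riemann theta function `θ(τ,z) = ∑_{n ∈ ℤ^g} exp(πi(nᵀτn + 2nᵀz))` is well defined. -/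
theorem theta_series_abs_summable (g : ℕ) (hg : 1 ≤ g)
    (τ : Matrix (Fin g) (Fin g) ℂ) (hsym : τ.IsSymm)
    (hpos : (Matrix.of fun i j => (τ i j).im).PosDef)
    (z : Fin g → ℂ) :
    Summable (fun n : Fin g → ℤ => ‖thetaTerm g τ z n‖) ∧
      Summable (fun n : Fin g → ℤ => thetaTerm g τ z n) :=
  theta_series_abs_summable_general g τ hpos z
end

section
/- For every τ ∈ H_g, the stabilizer of τ under the action of the integral symplectic group, i.e. the set {γ = (A B; C D) ∈ Sp(2g,ℤ) : (Aτ+B)(Cτ+D)⁻¹ = τ}, is a finite set. -/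
open scoped Matrix
open Matrix

/-- The standard symplectic form `J = (0 1; −1 0)` in `g × g` blocks, over `ℤ`. -/
def JmatZ (g : ℕ) : Matrix (Fin g ⊕ Fin g) (Fin g ⊕ Fin g) ℤ :=
  Matrix.fromBlocks 0 1 (-1) 0

/-- The action `γ∘τ = (Aτ+B)(Cτ+D)⁻¹` of an integral `2g × 2g` matrix `γ`
(written in `g × g` blocks `γ = (A B; C D)`) on a `g × g` complex matrix `τ`. -/
noncomputable def sympActZ (g : ℕ) (γ : Matrix (Fin g ⊕ Fin g) (Fin g ⊕ Fin g) ℤ)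
    (τ : Matrix (Fin g) (Fin g) ℂ) : Matrix (Fin g) (Fin g) ℂ :=
  (γ.toBlocks₁₁.map (fun x : ℤ => (x : ℂ)) * τ + γ.toBlocks₁₂.map (fun x : ℤ => (x : ℂ))) *
    (γ.toBlocks₂₁.map (fun x : ℤ => (x : ℂ)) * τ + γ.toBlocks₂₂.map (fun x : ℤ => (x : ℂ)))⁻¹

/-!
If `γ = (A B; C D)` fixes `τ`, then `γ` maps the column `(τ; 1)` to `(τ; 1)(Cτ + D)`, and since
`γ` preserves the form `J`, the matrix `M = Cτ + D` preserves the positive definite form `Im τ`: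
`Mᴴ (Im τ) M = Im τ`. So `M` is conjugate to a unitary matrix and is bounded in terms of `τ`
alone, and so is `Aτ + B = τ M`. As `Im τ` is invertible, the real blocks are bounded linear
functions of `Aτ + B` and `Cτ + D`, so the stabilizer consists of integer matrices of bounded
norm.
-/

open scoped MatrixOrder ComplexOrder Matrix.Norms.Elementwise
open Complex

namespace Matrix

theorem norm_mul_le_card_mul {α l m p : Type*} [NormedRing α] [Fintype l] [Fintype m]
    [Fintype p] (A : Matrix l m α) (B : Matrix m p α) :
    ‖A * B‖ ≤ Fintype.card m * ‖A‖ * ‖B‖ := by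
  refine (norm_le_iff (by positivity)).mpr fun i j => ?_
  calc ‖(A * B) i j‖ ≤ ∑ k, ‖A i k‖ * ‖B k j‖ := by
        rw [mul_apply]
        exact (norm_sum_le _ _).trans (Finset.sum_le_sum fun k _ => norm_mul_le _ _)
    _ ≤ ∑ _k : m, ‖A‖ * ‖B‖ := Finset.sum_le_sum fun k _ =>
        mul_le_mul (norm_entry_le_entrywise_sup_norm A) (norm_entry_le_entrywise_sup_norm B)
          (norm_nonneg _) (norm_nonneg _)
    _ = Fintype.card m * ‖A‖ * ‖B‖ := by simp [mul_assoc]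

theorem norm_map_le {α β m p : Type*} [Fintype m] [Fintype p] [SeminormedAddCommGroup α]
    [SeminormedAddCommGroup β] (A : Matrix m p α) {f : α → β} (hf : ∀ a, ‖f a‖ ≤ ‖a‖) :
    ‖A.map f‖ ≤ ‖A‖ :=
  (norm_le_iff (norm_nonneg A)).mpr fun _ _ => (hf _).trans (norm_entry_le_entrywise_sup_norm A)

theorem finite_setOf_norm_le {m p : Type*} [Fintype m] [Fintype p] (r : ℝ) :
    {γ : Matrix m p ℤ | ‖γ‖ ≤ r}.Finite := by
  refine (Set.Finite.pi fun _ => Set.Finite.pi fun _ => Set.finite_Icc (-⌈r⌉) ⌈r⌉).subset ?_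
  intro γ hγ i _ j _
  have h : ((|γ i j| : ℤ) : ℝ) ≤ ⌈r⌉ := by
    rw [Int.cast_abs, ← Int.norm_eq_abs]
    exact ((norm_entry_le_entrywise_sup_norm γ).trans hγ).trans (Int.le_ceil r)
  exact abs_le.mp (Int.cast_le.mp h)

variable {n : Type*}

theorem sub_conjTranspose_eq_smul_im {τ : Matrix n n ℂ} (hτ : τ.IsSymm) :
    τ - τᴴ = (2 * I) • (τ.map im).map ofReal := by
  ext i j
  rw [sub_apply, conjTranspose_apply, hτ.apply i j]
  apply Complex.ext <;> simp; ring

section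

variable [Fintype n]

theorem map_im_ofReal_mul_add (P Q : Matrix n n ℝ) (τ : Matrix n n ℂ) :
    (P.map ofReal * τ + Q.map ofReal).map im = P * τ.map im := by
  ext i j
  simp [mul_apply, im_sum]

theorem map_re_ofReal_mul_add (P Q : Matrix n n ℝ) (τ : Matrix n n ℂ) :
    (P.map ofReal * τ + Q.map ofReal).map re = P * τ.map re + Q := by
  ext i j
  simp [mul_apply, re_sum]

variable [DecidableEq n]

theorem PosDef.exists_isUnit_eq_conjTranspose_mul_self {𝕜 : Type*} [RCLike 𝕜]
    {H : Matrix n n 𝕜} (hH : H.PosDef) : ∃ B : Matrix n n 𝕜, IsUnit B ∧ H = Bᴴ * B :=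
  CStarAlgebra.isStrictlyPositive_iff_eq_star_mul_self.mp hH.isStrictlyPositive

theorem PosDef.map_ofReal {Y : Matrix n n ℝ} (hY : Y.PosDef) : (Y.map ofReal).PosDef := by
  obtain ⟨B, hB, rfl⟩ := hY.exists_isUnit_eq_conjTranspose_mul_self
  have hmap : (Bᴴ * B).map ofReal = (B.map ofReal)ᴴ * B.map ofReal := by
    ext i j
    simp [mul_apply]
  rw [hmap]
  exact .conjTranspose_mul_self _
    (mulVec_injective_iff_isUnit.mpr (hB.map Complex.ofRealHom.mapMatrix))

/-- Writing `H = Bᴴ B`, such an `M` is conjugate by `B` to a unitary matrix. -/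
theorem exists_norm_le_of_conjTranspose_mul_mul_eq {𝕜 : Type*} [RCLike 𝕜] {H : Matrix n n 𝕜}
    (hH : H.PosDef) : ∃ R, ∀ M : Matrix n n 𝕜, Mᴴ * H * M = H → ‖M‖ ≤ R := by
  obtain ⟨B, hB, rfl⟩ := hH.exists_isUnit_eq_conjTranspose_mul_self
  have hBdet : IsUnit B.det := (isUnit_iff_isUnit_det B).mp hB
  refine ⟨Fintype.card n * ‖B⁻¹‖ * (Fintype.card n * ‖B‖), fun M hM => ?_⟩
  have hU : B * M * B⁻¹ ∈ unitaryGroup n 𝕜 := by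
    rw [mem_unitaryGroup_iff', star_eq_conjTranspose]
    calc (B * M * B⁻¹)ᴴ * (B * M * B⁻¹) = (B⁻¹)ᴴ * (Mᴴ * (Bᴴ * B) * M) * B⁻¹ := by
          simp only [conjTranspose_mul, Matrix.mul_assoc]
      _ = (B * B⁻¹)ᴴ * (B * B⁻¹) := by
          rw [hM, conjTranspose_mul]; simp only [Matrix.mul_assoc]
      _ = 1 := by rw [mul_nonsing_inv B hBdet, conjTranspose_one, Matrix.one_mul]
  have hMU : M = B⁻¹ * ((B * M * B⁻¹) * B) := by
    simp only [← Matrix.mul_assoc, nonsing_inv_mul B hBdet, Matrix.one_mul,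
      nonsing_inv_mul_cancel_right _ _ hBdet]
  calc ‖M‖ = ‖B⁻¹ * ((B * M * B⁻¹) * B)‖ := by rw [← hMU]
    _ ≤ Fintype.card n * ‖B⁻¹‖ * (Fintype.card n * ‖B * M * B⁻¹‖ * ‖B‖) :=
        (norm_mul_le_card_mul _ _).trans (by gcongr; exact norm_mul_le_card_mul _ _)
    _ ≤ Fintype.card n * ‖B⁻¹‖ * (Fintype.card n * ‖B‖) := by
        gcongr
        exact mul_le_of_le_one_right (by positivity) (entrywise_sup_norm_bound_of_unitary hU)

noncomputable def siegelNum (γ : Matrix (n ⊕ n) (n ⊕ n) ℝ) (τ : Matrix n n ℂ) : Matrix n n ℂ :=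
  γ.toBlocks₁₁.map ofReal * τ + γ.toBlocks₁₂.map ofReal

noncomputable def siegelDenom (γ : Matrix (n ⊕ n) (n ⊕ n) ℝ) (τ : Matrix n n ℂ) :
    Matrix n n ℂ :=
  γ.toBlocks₂₁.map ofReal * τ + γ.toBlocks₂₂.map ofReal

/- `fromBlocks τ 0 1 0` stands in for the column `(τ; 1)`: products of rectangular complex matrices
elaborate to `CStarMatrix` multiplication, on which the `Matrix` block lemmas do not fire. -/
theorem map_ofReal_mul_fromBlocks (γ : Matrix (n ⊕ n) (n ⊕ n) ℝ) (τ : Matrix n n ℂ) :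
    γ.map ofReal * fromBlocks τ 0 1 0 = fromBlocks (siegelNum γ τ) 0 (siegelDenom γ τ) 0 := by
  conv_lhs => rw [← fromBlocks_toBlocks (γ.map ofReal)]
  rw [fromBlocks_multiply]
  simp only [Matrix.mul_one, Matrix.mul_zero, add_zero]
  rfl

theorem conjTranspose_fromBlocks_mul_J_mul_fromBlocks {R : Type*} [CommRing R] [StarRing R]
    (P Q : Matrix n n R) :
    (fromBlocks P 0 Q (0 : Matrix n n R))ᴴ * J n R * fromBlocks P 0 Q 0 =
      fromBlocks (Qᴴ * P - Pᴴ * Q) 0 0 (0 : Matrix n n R) := by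
  simp only [J, fromBlocks_conjTranspose, fromBlocks_multiply, conjTranspose_zero,
    Matrix.zero_mul, Matrix.mul_zero, Matrix.neg_mul, Matrix.mul_neg, zero_add, add_zero, neg_zero]
  rw [Matrix.mul_one, Matrix.mul_one, ← sub_eq_add_neg]

theorem conjTranspose_map_ofReal_mul_J_mul {γ : Matrix (n ⊕ n) (n ⊕ n) ℝ}
    (hγ : γ ∈ symplecticGroup n ℝ) : (γ.map ofReal)ᴴ * J n ℂ * γ.map ofReal = J n ℂ := by
  have hreal : (γ.map ofReal)ᴴ = γᵀ.map ofRealHom := by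
    ext i j
    simp
  have h := congrArg (Matrix.map · ofRealHom) (SymplecticGroup.mem_iff'.mp hγ)
  simp only [Matrix.map_mul, map_J] at h
  rw [hreal]
  exact h

theorem conjTranspose_siegelDenom_mul_sub {γ : Matrix (n ⊕ n) (n ⊕ n) ℝ}
    (hγ : γ ∈ symplecticGroup n ℝ) (τ : Matrix n n ℂ) :
    (siegelDenom γ τ)ᴴ * siegelNum γ τ - (siegelNum γ τ)ᴴ * siegelDenom γ τ = τ - τᴴ := by
  have h : (γ.map ofReal * fromBlocks τ 0 1 0)ᴴ * J n ℂ * (γ.map ofReal * fromBlocks τ 0 1 0)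
      = (fromBlocks τ 0 1 0)ᴴ * J n ℂ * fromBlocks τ 0 1 0 :=
    calc _ = (fromBlocks τ 0 1 0)ᴴ * ((γ.map ofReal)ᴴ * J n ℂ * γ.map ofReal) *
          fromBlocks τ 0 1 0 := by simp only [conjTranspose_mul, Matrix.mul_assoc]
      _ = _ := by rw [conjTranspose_map_ofReal_mul_J_mul hγ]
  rw [map_ofReal_mul_fromBlocks, conjTranspose_fromBlocks_mul_J_mul_fromBlocks,
    conjTranspose_fromBlocks_mul_J_mul_fromBlocks, conjTranspose_one, Matrix.one_mul,
    Matrix.mul_one] at h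
  exact (fromBlocks_inj.mp h).1

/-- A kernel vector `v` of `Cτ + D` would give `vᴴ (Im τ) v = 0`. -/
theorem isUnit_det_siegelDenom {γ : Matrix (n ⊕ n) (n ⊕ n) ℝ} (hγ : γ ∈ symplecticGroup n ℝ)
    {τ : Matrix n n ℂ} (hτ : τ.IsSymm) (hY : (τ.map im).PosDef) :
    IsUnit (siegelDenom γ τ).det := by
  rw [isUnit_iff_ne_zero]
  intro hdet
  obtain ⟨v, hv, hMv⟩ := exists_mulVec_eq_zero_iff.mpr hdet
  have hMadj : ∀ w, star v ⬝ᵥ (siegelDenom γ τ)ᴴ *ᵥ w = 0 := fun w => by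
    rw [dotProduct_mulVec, ← star_mulVec, hMv, star_zero, zero_dotProduct]
  have hform := congrArg (fun X => star v ⬝ᵥ X *ᵥ v) (conjTranspose_siegelDenom_mul_sub hγ τ)
  simp only [sub_mulVec, ← mulVec_mulVec, hMadj, hMv, mulVec_zero, sub_zero,
    sub_conjTranspose_eq_smul_im hτ, smul_mulVec, dotProduct_smul, smul_eq_mul] at hform
  exact mul_ne_zero (mul_ne_zero two_ne_zero I_ne_zero)
    (hY.map_ofReal.dotProduct_mulVec_pos hv).ne' hform.symm

theorem conjTranspose_siegelDenom_mul_im_mul {γ : Matrix (n ⊕ n) (n ⊕ n) ℝ}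
    (hγ : γ ∈ symplecticGroup n ℝ) {τ : Matrix n n ℂ} (hτ : τ.IsSymm)
    (hfix : siegelNum γ τ = τ * siegelDenom γ τ) :
    (siegelDenom γ τ)ᴴ * (τ.map im).map ofReal * siegelDenom γ τ = (τ.map im).map ofReal := by
  have h : (siegelDenom γ τ)ᴴ * (τ - τᴴ) * siegelDenom γ τ = τ - τᴴ := by
    conv_rhs => rw [← conjTranspose_siegelDenom_mul_sub hγ τ, hfix, conjTranspose_mul]
    simp only [Matrix.mul_sub, Matrix.sub_mul, Matrix.mul_assoc]
  rw [sub_conjTranspose_eq_smul_im hτ, Matrix.mul_smul, Matrix.smul_mul] at h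
  exact smul_right_injective _ (mul_ne_zero two_ne_zero I_ne_zero) h

/-- Since `Im τ` is invertible, `P` and `Q` are recovered from `Pτ + Q` as
`P = Im (Pτ + Q) (Im τ)⁻¹` and `Q = Re (Pτ + Q) - P Re τ`. -/
theorem exists_norm_le_of_norm_ofReal_mul_add_le {τ : Matrix n n ℂ}
    (hY : IsUnit (τ.map im).det) :
    ∃ c, ∀ (P Q : Matrix n n ℝ) (r : ℝ), ‖P.map ofReal * τ + Q.map ofReal‖ ≤ r →
      ‖P‖ ≤ c * r ∧ ‖Q‖ ≤ c * r := by
  set k : ℝ := (Fintype.card n : ℝ)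
  set a := k * ‖(τ.map im)⁻¹‖
  set b := k * ‖τ.map re‖
  have ha : 0 ≤ a := by positivity
  have hb : 0 ≤ b := by positivity
  refine ⟨(1 + a) * (1 + b), fun P Q r hr => ?_⟩
  have hr0 : 0 ≤ r := (norm_nonneg _).trans hr
  set Z := P.map ofReal * τ + Q.map ofReal
  have hP : ‖P‖ ≤ a * r := calc
    ‖P‖ = ‖Z.map im * (τ.map im)⁻¹‖ := by
        rw [map_im_ofReal_mul_add, mul_nonsing_inv_cancel_right _ _ hY]
    _ ≤ k * ‖Z.map im‖ * ‖(τ.map im)⁻¹‖ := norm_mul_le_card_mul _ _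
    _ ≤ k * r * ‖(τ.map im)⁻¹‖ := by
        gcongr
        exact (norm_map_le _ fun z => (Real.norm_eq_abs _).trans_le (abs_im_le_norm z)).trans hr
    _ = a * r := by ring
  have hQ : ‖Q‖ ≤ r + b * (a * r) := calc
    ‖Q‖ = ‖Z.map re - P * τ.map re‖ := by rw [map_re_ofReal_mul_add, add_sub_cancel_left]
    _ ≤ ‖Z.map re‖ + k * ‖P‖ * ‖τ.map re‖ := (norm_sub_le _ _).trans
        (add_le_add_right (norm_mul_le_card_mul _ _) _)
    _ ≤ r + k * (a * r) * ‖τ.map re‖ := by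
        gcongr
        exact (norm_map_le _ fun z => (Real.norm_eq_abs _).trans_le (abs_re_le_norm z)).trans hr
    _ = r + b * (a * r) := by ring
  constructor
  · nlinarith [mul_nonneg (mul_nonneg ha hb) hr0, mul_nonneg hb hr0]
  · nlinarith [mul_nonneg (mul_nonneg ha hb) hr0, mul_nonneg ha hr0]

theorem exists_norm_le_of_norm_siegel_le {τ : Matrix n n ℂ} (hY : IsUnit (τ.map im).det) :
    ∃ c, ∀ (γ : Matrix (n ⊕ n) (n ⊕ n) ℝ) (r : ℝ), ‖siegelNum γ τ‖ ≤ r →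
      ‖siegelDenom γ τ‖ ≤ r → ‖γ‖ ≤ c * r := by
  obtain ⟨c, hc⟩ := exists_norm_le_of_norm_ofReal_mul_add_le hY
  refine ⟨c, fun γ r hN hM => ?_⟩
  obtain ⟨hA, hB⟩ := hc _ _ r hN
  obtain ⟨hC, hD⟩ := hc _ _ r hM
  refine (norm_le_iff ((norm_nonneg _).trans hA)).mpr ?_
  rintro (i | i) (j | j)
  exacts [(norm_entry_le_entrywise_sup_norm γ.toBlocks₁₁).trans hA,
    (norm_entry_le_entrywise_sup_norm γ.toBlocks₁₂).trans hB,
    (norm_entry_le_entrywise_sup_norm γ.toBlocks₂₁).trans hC,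
    (norm_entry_le_entrywise_sup_norm γ.toBlocks₂₂).trans hD]

end

end Matrix

open Matrix

theorem mem_symplecticGroup_of_mul_JmatZ_mul {g : ℕ}
    {γ : Matrix (Fin g ⊕ Fin g) (Fin g ⊕ Fin g) ℤ} (h : γ * JmatZ g * γᵀ = JmatZ g) :
    γ ∈ symplecticGroup (Fin g) ℤ := by
  have hJ : JmatZ g = -J (Fin g) ℤ := by
    simp [JmatZ, J, fromBlocks_neg]
  rw [SymplecticGroup.mem_iff]
  rw [hJ] at h
  simpa using h

theorem sympActZ_eq_siegelNum_mul_inv (g : ℕ) (γ : Matrix (Fin g ⊕ Fin g) (Fin g ⊕ Fin g) ℤ)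
    (τ : Matrix (Fin g) (Fin g) ℂ) :
    sympActZ g γ τ = siegelNum (γ.map (Int.castRingHom ℝ)) τ *
      (siegelDenom (γ.map (Int.castRingHom ℝ)) τ)⁻¹ := by
  have hcast : ∀ A : Matrix (Fin g) (Fin g) ℤ,
      A.map (fun x : ℤ => (x : ℂ)) = (A.map (Int.castRingHom ℝ)).map ofReal := fun A => by
    ext
    simp
  simp only [sympActZ, hcast]
  rfl

/-- For every `τ` in the Siegel upper half-space, the stabilizer of `τ` in the
integral symplectic group `Sp(2g,ℤ)` is a finite set. -/
theorem siegel_stabilizer_finite (g : ℕ)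
    (τ : Matrix (Fin g) (Fin g) ℂ) (hsym : τ.IsSymm)
    (hpos : (Matrix.of fun i j => (τ i j).im).PosDef) :
    {γ : Matrix (Fin g ⊕ Fin g) (Fin g ⊕ Fin g) ℤ |
      γ * JmatZ g * γᵀ = JmatZ g ∧ sympActZ g γ τ = τ}.Finite := by
  have hY : (τ.map im).PosDef := hpos
  obtain ⟨R, hR⟩ := exists_norm_le_of_conjTranspose_mul_mul_eq hY.map_ofReal
  obtain ⟨c, hc⟩ := exists_norm_le_of_norm_siegel_le hY.det_pos.ne'.isUnit
  refine (finite_setOf_norm_le (c * ((g * ‖τ‖ + 1) * R))).subset ?_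
  rintro γ ⟨hsp, hfix⟩
  set γℝ := γ.map (Int.castRingHom ℝ)
  have hγ : γℝ ∈ symplecticGroup (Fin g) ℝ :=
    SymplecticGroup.map_mem (mem_symplecticGroup_of_mul_JmatZ_mul hsp) _
  have hdet := isUnit_det_siegelDenom hγ hsym hY
  have hN : siegelNum γℝ τ = τ * siegelDenom γℝ τ := by
    rw [sympActZ_eq_siegelNum_mul_inv] at hfix
    rw [← nonsing_inv_mul_cancel_right _ (siegelNum γℝ τ) hdet, hfix]
  have hMR : ‖siegelDenom γℝ τ‖ ≤ R := hR _ (conjTranspose_siegelDenom_mul_im_mul hγ hsym hN)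
  have hR0 : 0 ≤ R := (norm_nonneg _).trans hMR
  show ‖γ‖ ≤ _
  rw [← norm_map_eq γ _ fun x => (Int.norm_cast_real x).symm]
  refine hc γℝ _ ?_ (hMR.trans (le_mul_of_one_le_left hR0 (le_add_of_nonneg_left (by positivity))))
  calc ‖siegelNum γℝ τ‖ ≤ g * ‖τ‖ * ‖siegelDenom γℝ τ‖ := by
        simpa [hN] using norm_mul_le_card_mul τ (siegelDenom γℝ τ)
    _ ≤ g * ‖τ‖ * R := by gcongr
    _ ≤ (g * ‖τ‖ + 1) * R := by linarith
end

section
/- For every γ = (A B; C D) ∈ Sp(2g,ℝ) and every τ ∈ H_g, the map f_γ : σ ↦ (Aσ+B)(Cσ+D)⁻¹, defined on the open set of g×g complex matrices σ for which Cσ+D is invertible, is complex (Fréchet) differentiable at τ, with derivative the linear map X ↦ ((Cτ+D)ᵀ)⁻¹ · X · (Cτ+D)⁻¹ on the space of g×g complex matrices. -/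
open scoped Matrix
open Matrix

attribute [local instance] Matrix.normedAddCommGroup Matrix.normedSpace

/-- The standard symplectic form `J = (0 1; −1 0)` in `g × g` blocks, over `ℝ`. -/
def Jmat (g : ℕ) : Matrix (Fin g ⊕ Fin g) (Fin g ⊕ Fin g) ℝ :=
  Matrix.fromBlocks 0 1 (-1) 0

noncomputable def mulLeftRight (g : ℕ) (P Q : Matrix (Fin g) (Fin g) ℂ) :
    Matrix (Fin g) (Fin g) ℂ →ₗ[ℂ] Matrix (Fin g) (Fin g) ℂ where
  toFun X := P * X * Q
  map_add' X Y := by simp only [Matrix.mul_add, Matrix.add_mul]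
  map_smul' c X := by simp [Matrix.mul_smul, Matrix.smul_mul]

/-!
Write `N = Aσ + B` and `M = Cσ + D`. In any Banach algebra, `σ ↦ N M⁻¹` has derivative
`X ↦ (A - N M⁻¹ C) X M⁻¹` wherever `M` is invertible. For `γ` symplectic and `τ` symmetric one has
`Nᵀ M = Mᵀ N` and `Mᵀ A - Nᵀ C = 1`, which turn `A - N M⁻¹ C` into `(Mᵀ)⁻¹`. Finally `M` is
invertible at `τ ∈ H_g` because `Mᴴ N - Nᴴ M = τ - τᴴ = 2i Im τ`: a vector `v` with `M v = 0`
would give `v* (Im τ) v = 0`.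
-/

open Complex

section LinearFractional

variable {𝕜 𝔸 : Type*} [NontriviallyNormedField 𝕜] [NormedRing 𝔸] [NormedAlgebra 𝕜 𝔸]
  [HasSummableGeomSeries 𝔸]

theorem hasFDerivAt_linearFractional (a b c d x : 𝔸) (hx : IsUnit (c * x + d)) :
    HasFDerivAt (fun y ↦ (a * y + b) * Ring.inverse (c * y + d))
      (ContinuousLinearMap.mulLeftRight 𝕜 𝔸 (a - (a * x + b) * Ring.inverse (c * x + d) * c)
        (Ring.inverse (c * x + d))) x := by
  obtain ⟨u, hu⟩ := hx
  have hnum : HasFDerivAt (fun y ↦ a * y + b) (a • ContinuousLinearMap.id 𝕜 𝔸) x :=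
    ((hasFDerivAt_id x).const_mul a).add_const b
  have hden : HasFDerivAt (fun y ↦ c * y + d) (c • ContinuousLinearMap.id 𝕜 𝔸) x :=
    ((hasFDerivAt_id x).const_mul c).add_const d
  have hinv := (hu ▸ hasFDerivAt_ringInverse (𝕜 := 𝕜) u).comp x hden
  refine (hnum.mul' hinv).congr_fderiv ?_
  ext y
  simp only [← hu, Ring.inverse_unit, _root_.add_apply, _root_.smul_apply, _root_.neg_apply,
    ContinuousLinearMap.comp_apply, ContinuousLinearMap.id_apply,
    ContinuousLinearMap.mulLeftRight_apply, Function.comp_apply,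
    MulOpposite.smul_eq_mul_unop, MulOpposite.unop_op, smul_eq_mul]
  noncomm_ring

end LinearFractional

theorem hasFDerivAt_matrix_linearFractional {g : ℕ} (A B C D τ : Matrix (Fin g) (Fin g) ℂ)
    (hdet : IsUnit (C * τ + D).det) :
    HasFDerivAt (fun σ ↦ (A * σ + B) * (C * σ + D)⁻¹)
      (LinearMap.toContinuousLinearMap
        (mulLeftRight g (A - (A * τ + B) * (C * τ + D)⁻¹ * C) (C * τ + D)⁻¹)) τ := by
  -- `HasFDerivAt` only sees the topology, so we may switch to a submultiplicative norm.
  let _ : NormedRing (Matrix (Fin g) (Fin g) ℂ) := Matrix.linftyOpNormedRing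
  let _ : NormedAlgebra ℂ (Matrix (Fin g) (Fin g) ℂ) := Matrix.linftyOpNormedAlgebra
  -- Instance search does not unfold the new uniformity to the product one, hence the explicit term.
  have : HasSummableGeomSeries (Matrix (Fin g) (Fin g) ℂ) :=
    @instHasSummableGeomSeriesOfCompleteSpace _ _ (Matrix.instCompleteSpace _ _ _)
  have h := hasFDerivAt_linearFractional (𝕜 := ℂ) A B C D τ ((isUnit_iff_isUnit_det _).2 hdet)
  simp only [← nonsing_inv_eq_ringInverse] at h
  exact h

namespace SymplecticGroup

section CommRing

variable {n R : Type*} [Fintype n] [DecidableEq n] [CommRing R] {A B C D τ : Matrix n n R}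

theorem transpose_mul_sub_transpose_mul_eq_one_of_fromBlocks_mem
    (hγ : fromBlocks A B C D ∈ symplecticGroup n R) : Dᵀ * A - Bᵀ * C = 1 := by
  simpa using congrArg transpose (fromBlocks_mem_iff.1 hγ).2.2

theorem transpose_mul_add_comm (hγ : fromBlocks A B C D ∈ symplecticGroup n R)
    (hτ : τ.IsSymm) : (A * τ + B)ᵀ * (C * τ + D) = (C * τ + D)ᵀ * (A * τ + B) := by
  obtain ⟨hAC, hBD, hAD⟩ := fromBlocks_mem_iff.1 hγ
  have hDA := transpose_mul_sub_transpose_mul_eq_one_of_fromBlocks_mem hγ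
  rw [transpose_add, transpose_add, transpose_mul, transpose_mul, hτ.eq]
  linear_combination (norm := noncomm_ring) τ * hAC * τ + τ * hAD - hDA * τ + hBD

theorem transpose_mul_add_mul_sub_eq_one (hγ : fromBlocks A B C D ∈ symplecticGroup n R)
    (hτ : τ.IsSymm) : (C * τ + D)ᵀ * A - (A * τ + B)ᵀ * C = 1 := by
  obtain ⟨hAC, -, hAD⟩ := fromBlocks_mem_iff.1 hγ
  have hDA := transpose_mul_sub_transpose_mul_eq_one_of_fromBlocks_mem hγ
  rw [transpose_add, transpose_add, transpose_mul, transpose_mul, hτ.eq]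
  linear_combination (norm := noncomm_ring) -(τ * hAC) + hDA

theorem inv_transpose_mul_add_eq (hγ : fromBlocks A B C D ∈ symplecticGroup n R)
    (hτ : τ.IsSymm) (hdet : IsUnit (C * τ + D).det) :
    ((C * τ + D)ᵀ)⁻¹ = A - (A * τ + B) * (C * τ + D)⁻¹ * C := by
  refine inv_eq_right_inv ?_
  calc (C * τ + D)ᵀ * (A - (A * τ + B) * (C * τ + D)⁻¹ * C)
      = (C * τ + D)ᵀ * A - (C * τ + D)ᵀ * (A * τ + B) * (C * τ + D)⁻¹ * C := by noncomm_ring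
    _ = (C * τ + D)ᵀ * A - (A * τ + B)ᵀ * ((C * τ + D) * (C * τ + D)⁻¹) * C := by
      rw [← transpose_mul_add_comm hγ hτ]; noncomm_ring
    _ = 1 := by
      rw [mul_nonsing_inv _ hdet, Matrix.mul_one, transpose_mul_add_mul_sub_eq_one hγ hτ]

end CommRing

end SymplecticGroup

namespace Matrix

variable {n : Type*}

theorem conjTranspose_map_ofReal {m : Type*} (A : Matrix m n ℝ) :
    (A.map ((↑) : ℝ → ℂ))ᴴ = (A.map (↑))ᵀ := by
  ext
  simp

theorem re_star_dotProduct_map_ofReal_mulVec [Fintype n] (S : Matrix n n ℝ) (v : n → ℂ) :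
    (star v ⬝ᵥ (S.map (↑) *ᵥ v)).re =
      (fun i ↦ (v i).re) ⬝ᵥ (S *ᵥ fun i ↦ (v i).re) +
        (fun i ↦ (v i).im) ⬝ᵥ (S *ᵥ fun i ↦ (v i).im) := by
  simp only [dotProduct, mulVec, map_apply, Pi.star_apply, RCLike.star_def, re_sum, Finset.mul_sum,
    ← Finset.sum_add_distrib, mul_re, mul_im, conj_re, conj_im, ofReal_re, ofReal_im]
  refine Finset.sum_congr rfl fun i _ ↦ Finset.sum_congr rfl fun j _ ↦ ?_
  ring

theorem PosDef.re_star_dotProduct_map_ofReal_mulVec_pos [Fintype n] {S : Matrix n n ℝ}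
    (hS : S.PosDef) {v : n → ℂ} (hv : v ≠ 0) : 0 < (star v ⬝ᵥ (S.map (↑) *ᵥ v)).re := by
  rw [re_star_dotProduct_map_ofReal_mulVec]
  have hnonneg (x : n → ℝ) : 0 ≤ x ⬝ᵥ (S *ᵥ x) := by
    simpa using hS.posSemidef.dotProduct_mulVec_nonneg x
  have hpos {x : n → ℝ} (hx : x ≠ 0) : 0 < x ⬝ᵥ (S *ᵥ x) := by
    simpa using hS.dotProduct_mulVec_pos hx
  by_cases hre : (fun i ↦ (v i).re) = 0
  · have him : (fun i ↦ (v i).im) ≠ 0 := fun him ↦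
      hv (funext fun i ↦ Complex.ext (congrFun hre i) (congrFun him i))
    exact add_pos_of_nonneg_of_pos (hnonneg _) (hpos him)
  · exact add_pos_of_pos_of_nonneg (hpos hre) (hnonneg _)

theorem IsSymm.sub_conjTranspose {τ : Matrix n n ℂ} (hτ : τ.IsSymm) :
    τ - τᴴ = (2 * I) • (of fun i j ↦ (τ i j).im).map (↑) := by
  ext i j
  rw [sub_apply, conjTranspose_apply, hτ.apply i j, RCLike.star_def, sub_conj]
  simp only [smul_apply, map_apply, of_apply, smul_eq_mul]
  push_cast
  ring

end Matrix

namespace SymplecticGroup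

variable {n : Type*} [Fintype n] [DecidableEq n] {A B C D : Matrix n n ℝ}

theorem fromBlocks_map_ofReal_mem (hγ : fromBlocks A B C D ∈ symplecticGroup n ℝ) :
    fromBlocks (A.map (↑)) (B.map (↑)) (C.map (↑)) (D.map (↑)) ∈ symplecticGroup n ℂ := by
  rw [← fromBlocks_map]
  exact map_mem hγ ofRealHom

theorem conjTranspose_mul_add_sub (hγ : fromBlocks A B C D ∈ symplecticGroup n ℝ)
    (τ : Matrix n n ℂ) :
    (C.map (↑) * τ + D.map (↑))ᴴ * (A.map (↑) * τ + B.map (↑)) -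
      (A.map (↑) * τ + B.map (↑))ᴴ * (C.map (↑) * τ + D.map (↑)) = τ - τᴴ := by
  obtain ⟨hAC, hBD, hAD⟩ := fromBlocks_mem_iff.1 (fromBlocks_map_ofReal_mem hγ)
  have hDA :=
    transpose_mul_sub_transpose_mul_eq_one_of_fromBlocks_mem (fromBlocks_map_ofReal_mem hγ)
  simp only [conjTranspose_add, conjTranspose_mul, conjTranspose_map_ofReal]
  linear_combination (norm := noncomm_ring) -(τᴴ * hAC * τ) - τᴴ * hAD + hDA * τ - hBD

theorem isUnit_det_mul_add_of_posDef_im (hγ : fromBlocks A B C D ∈ symplecticGroup n ℝ)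
    {τ : Matrix n n ℂ} (hτ : τ.IsSymm) (hpos : (of fun i j ↦ (τ i j).im).PosDef) :
    IsUnit (C.map ((↑) : ℝ → ℂ) * τ + D.map ((↑) : ℝ → ℂ)).det := by
  set M := C.map ((↑) : ℝ → ℂ) * τ + D.map ((↑) : ℝ → ℂ)
  set N := A.map ((↑) : ℝ → ℂ) * τ + B.map ((↑) : ℝ → ℂ)
  refine isUnit_iff_ne_zero.2 fun hM ↦ ?_
  obtain ⟨v, hv, hMv⟩ := exists_mulVec_eq_zero_iff.2 hM
  have hform : star v ⬝ᵥ ((Mᴴ * N - Nᴴ * M) *ᵥ v) = 0 := by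
    rw [sub_mulVec, ← mulVec_mulVec, ← mulVec_mulVec, hMv, mulVec_zero, dotProduct_sub,
      dotProduct_zero, dotProduct_mulVec, ← star_mulVec, hMv, star_zero, zero_dotProduct,
      sub_zero]
  rw [conjTranspose_mul_add_sub hγ, hτ.sub_conjTranspose, smul_mulVec, dotProduct_smul,
    smul_eq_mul, mul_eq_zero] at hform
  have hI : (2 * I : ℂ) ≠ 0 := by simp
  exact (hpos.re_star_dotProduct_map_ofReal_mulVec_pos hv).ne' (by simp [hform.resolve_left hI])

end SymplecticGroup

theorem Jmat_eq_neg_J (g : ℕ) : Jmat g = -J (Fin g) ℝ := by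
  simp [Jmat, J, fromBlocks_neg]

theorem mem_symplecticGroup_iff_mul_Jmat_mul_transpose {g : ℕ}
    {γ : Matrix (Fin g ⊕ Fin g) (Fin g ⊕ Fin g) ℝ} :
    γ ∈ symplecticGroup (Fin g) ℝ ↔ γ * Jmat g * γᵀ = Jmat g := by
  rw [SymplecticGroup.mem_iff, Jmat_eq_neg_J, Matrix.mul_neg, Matrix.neg_mul, neg_inj]

/-- For `γ = (A B; C D) ∈ Sp(2g,ℝ)` and `τ ∈ H_g`, the map
`f_γ : σ ↦ (Aσ+B)(Cσ+D)⁻¹` is complex differentiable at `τ`, with derivative the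
linear map `X ↦ ((Cτ+D)ᵀ)⁻¹ X (Cτ+D)⁻¹`. -/
theorem hasFDerivAt_symplectic_action (g : ℕ)
    (A B C D : Matrix (Fin g) (Fin g) ℝ)
    (hγ : Matrix.fromBlocks A B C D * Jmat g * (Matrix.fromBlocks A B C D)ᵀ = Jmat g)
    (τ : Matrix (Fin g) (Fin g) ℂ) (hsym : τ.IsSymm)
    (hpos : (Matrix.of fun i j => (τ i j).im).PosDef) :
    HasFDerivAt
      (fun σ : Matrix (Fin g) (Fin g) ℂ =>
        (A.map (fun x : ℝ => (x : ℂ)) * σ + B.map (fun x : ℝ => (x : ℂ))) *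
          (C.map (fun x : ℝ => (x : ℂ)) * σ + D.map (fun x : ℝ => (x : ℂ)))⁻¹)
      (LinearMap.toContinuousLinearMap
        (mulLeftRight g
          (((C.map (fun x : ℝ => (x : ℂ)) * τ + D.map (fun x : ℝ => (x : ℂ)))ᵀ)⁻¹)
          ((C.map (fun x : ℝ => (x : ℂ)) * τ + D.map (fun x : ℝ => (x : ℂ)))⁻¹)))
      τ := by
  have hγ' := mem_symplecticGroup_iff_mul_Jmat_mul_transpose.2 hγ
  have hdet := SymplecticGroup.isUnit_det_mul_add_of_posDef_im hγ' hsym hpos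
  have h := hasFDerivAt_matrix_linearFractional (A.map (↑)) (B.map (↑)) (C.map (↑)) (D.map (↑))
    τ hdet
  rwa [← SymplecticGroup.inv_transpose_mul_add_eq (SymplecticGroup.fromBlocks_map_ofReal_mem hγ')
    hsym hdet] at h
end
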